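/- Consider the 6-dimensional real Lie algebra g_{2,b} with basis e0,...,e5 and nonzero brackets [e2,e3]=e1, [e5,e2]=-e3, [e5,e3]=e2, [e5,e4]=-e1, [e0,e5]=b e4, [e0,e2]=e3, [e0,e3]=-e2. Then θ = e^0 and ω = -e^{01} - e^{23} - e^{45} define an LCS structure: ω is nondegenerate, dθ = 0 and dω = θ ∧ ω. -/

import Mathlib

/-- The bracket of the 6-dimensional Lie algebra `g_{2,b}`: nonzero brackets
`[e2,e3]=e1`, `[e5,e2]=-e3`, `[e5,e3]=e2`, `[e5,e4]=-e1`, `[e0,e5]=b e4`, `[e0,e2]=e3`,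
`[e0,e3]=-e2`. -/
def g2Bracket (b : ℝ) (X Y : Fin 6 → ℝ) : Fin 6 → ℝ :=
  ![0,
    X 2 * Y 3 - X 3 * Y 2 - (X 5 * Y 4 - X 4 * Y 5),
    (X 5 * Y 3 - X 3 * Y 5) - (X 0 * Y 3 - X 3 * Y 0),
    -(X 5 * Y 2 - X 2 * Y 5) + (X 0 * Y 2 - X 2 * Y 0),
    b * (X 0 * Y 5 - X 5 * Y 0),
    0]

/-- The 1-form `θ = e^0` on `g_{2,b}`. -/
def g2θ (X : Fin 6 → ℝ) : ℝ := X 0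

/-- The 2-form `ω = -e^{01} - e^{23} - e^{45}` on `g_{2,b}`. -/
def g2ω (X Y : Fin 6 → ℝ) : ℝ :=
  -(X 0 * Y 1 - X 1 * Y 0) - (X 2 * Y 3 - X 3 * Y 2) - (X 4 * Y 5 - X 5 * Y 4)

def g2J (X : Fin 6 → ℝ) : Fin 6 → ℝ := ![X 1, -X 0, X 3, -X 2, X 5, -X 4]

lemma g2ω_apply_g2J (X : Fin 6 → ℝ) : g2ω X (g2J X) = ∑ i, X i ^ 2 := by
  simp only [g2ω, g2J, Fin.sum_univ_six, Matrix.cons_val]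
  ring

lemma g2ω_nondegenerate (X : Fin 6 → ℝ) (h : ∀ Y, g2ω X Y = 0) : X = 0 := by
  have hsq : ∑ i, X i ^ 2 = 0 := by rw [← g2ω_apply_g2J, h]
  funext i
  exact pow_eq_zero_iff two_ne_zero |>.mp <|
    (Finset.sum_eq_zero_iff_of_nonneg fun j _ => sq_nonneg (X j)).mp hsq i (Finset.mem_univ i)

lemma g2θ_g2Bracket (b : ℝ) (X Y : Fin 6 → ℝ) : g2θ (g2Bracket b X Y) = 0 := rfl

lemma g2ω_cocycle (b : ℝ) (X Y Z : Fin 6 → ℝ) :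
    -g2ω (g2Bracket b X Y) Z + g2ω (g2Bracket b X Z) Y - g2ω (g2Bracket b Y Z) X
      = g2θ X * g2ω Y Z - g2θ Y * g2ω X Z + g2θ Z * g2ω X Y := by
  simp only [g2ω, g2θ, g2Bracket, Matrix.cons_val]
  ring

/-- On `g_{2,b}`, the pair `(ω = -e^{01} - e^{23} - e^{45}, θ = e^0)` is an LCS structure:
`ω` is nondegenerate, `dθ = 0`, and `dω = θ ∧ ω` (Chevalley–Eilenberg differential). -/
theorem g2_lcs (b : ℝ) :
    (∀ X : Fin 6 → ℝ, (∀ Y : Fin 6 → ℝ, g2ω X Y = 0) → X = 0) ∧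
    (∀ X Y : Fin 6 → ℝ, -g2θ (g2Bracket b X Y) = 0) ∧
    (∀ X Y Z : Fin 6 → ℝ,
      -g2ω (g2Bracket b X Y) Z + g2ω (g2Bracket b X Z) Y - g2ω (g2Bracket b Y Z) X
        = g2θ X * g2ω Y Z - g2θ Y * g2ω X Z + g2θ Z * g2ω X Y) :=
  ⟨g2ω_nondegenerate, fun X Y => by rw [g2θ_g2Bracket, neg_zero], g2ω_cocycle b⟩
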